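/- arXiv:2207.00578 — 3 statements merged into one kernel-verified Lean document; each statement's English description precedes it below -/
import Mathlib

section
/- Let θ(t) = t^{1/2}(log(1/t))^{3/2} and let λ > 0. Let σ be the solution of the ordinary differential equation (d/dt) log(σ(t)/(t σ′(t))) = θ(λt)/t with initial conditions σ(0) = 0 and σ′(0) = 1. Then there exists an absolute constant N such that for all t with 0 ≤ λt ≤ 1 one has t/N ≤ σ(t) ≤ t and 1/N ≤ σ′(t) ≤ 1. -/
open MeasureTheory Set Filter

noncomputable section

abbrev Eu (n : ℕ) : Type := EuclideanSpace ℝ (Fin n)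

/-- `i`-th spatial partial derivative. -/
noncomputable def pd (n : ℕ) (i : Fin n) (f : Eu n → ℝ) (x : Eu n) : ℝ :=
  fderiv ℝ f x (EuclideanSpace.single i 1)

/-- Spatial divergence `div (A ∇u)` for a time-dependent coefficient matrix. -/
noncomputable def divAGrad (n : ℕ) (A : Eu n → ℝ → Matrix (Fin n) (Fin n) ℝ)
    (u : Eu n → ℝ → ℝ) (x : Eu n) (t : ℝ) : ℝ :=
  ∑ i, pd n i (fun y => ∑ j, A y t i j * pd n j (fun z => u z t) y) x

/-- Squared Frobenius norm of the spatial Hessian. -/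
noncomputable def hessSq (n : ℕ) (w : Eu n → ℝ → ℝ) (x : Eu n) (t : ℝ) : ℝ :=
  ∑ i, ∑ j, (pd n i (fun y => pd n j (fun z => w z t) y) x) ^ 2

/-- Symmetry, uniform ellipticity and space-time (parabolic) Lipschitz regularity of `A`. -/
def IsEllipLip (n : ℕ) (Λ K : ℝ) (A : Eu n → ℝ → Matrix (Fin n) (Fin n) ℝ) : Prop :=
  (∀ x t, (A x t).IsSymm) ∧
  (∀ (x : Eu n) (t : ℝ) (ξ : Eu n),
      Λ⁻¹ * ‖ξ‖ ^ 2 ≤ ∑ i, ∑ j, A x t i j * ξ i * ξ j ∧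
        ∑ i, ∑ j, A x t i j * ξ i * ξ j ≤ Λ * ‖ξ‖ ^ 2) ∧
  (∀ (x y : Eu n) (t s : ℝ) (i j : Fin n),
      |A x t i j - A y s i j| ≤ K * (‖x - y‖ + |t - s| ^ ((1:ℝ)/2)))

/-- The weight `θ(t) = t^{1/2} (log(1/t))^{3/2}`. -/
noncomputable def thetaFn (t : ℝ) : ℝ := t ^ ((1:ℝ)/2) * (Real.log (1/t)) ^ ((3:ℝ)/2)

/-- Gaussian kernel `G(x,t) = t^{-n/2} e^{-|x|²/(4t)}`. -/
noncomputable def Gk (n : ℕ) (x : Eu n) (t : ℝ) : ℝ :=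
  t ^ (-(n:ℝ)/2) * Real.exp (-‖x‖ ^ 2 / (4 * t))

/-- The function `σ` (with derivative `σ'`) solving
`(d/dt) log (σ/(t σ')) = θ(λ t)/t`, `σ(0) = 0`, `σ'(0) = 1` on `[0, 1/λ]`. -/
def SigmaODE (lam : ℝ) (σ σ' : ℝ → ℝ) : Prop :=
  σ 0 = 0 ∧ σ' 0 = 1 ∧
  ContinuousOn σ' (Icc 0 (1/lam)) ∧
  (∀ t ∈ Icc (0:ℝ) (1/lam), HasDerivWithinAt σ (σ' t) (Icc 0 (1/lam)) t) ∧
  (∀ t ∈ Ioc (0:ℝ) (1/lam), 0 < σ t ∧ 0 < σ' t) ∧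
  (∀ t ∈ Ioc (0:ℝ) (1/lam),
    HasDerivWithinAt (fun s => Real.log (σ s) - Real.log s - Real.log (σ' s))
      (thetaFn (lam * t) / t) (Icc 0 (1/lam)) t)

/-- Smooth functions compactly supported in `S × [0, T)`. -/
def TestFn (n : ℕ) (S : Set (Eu n)) (T : ℝ) (w : Eu n → ℝ → ℝ) : Prop :=
  ContDiff ℝ (⊤ : ℕ∞) (fun p : Eu n × ℝ => w p.1 p.2) ∧
  HasCompactSupport (fun p : Eu n × ℝ => w p.1 p.2) ∧
  tsupport (fun p : Eu n × ℝ => w p.1 p.2) ⊆ S ×ˢ Ico 0 T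

/-- `‖V‖_{L^∞(Q₄)}`. -/
noncomputable def VsupQ4 (n : ℕ) (V : Eu n → ℝ → ℝ) : ℝ :=
  sSup {y | ∃ x ∈ Metric.ball (0:Eu n) 4, ∃ t ∈ Icc (0:ℝ) 16, y = |V x t|}

/-- `‖∇ₓV‖_{L^∞(Q₄)}`. -/
noncomputable def VgradSupQ4 (n : ℕ) (V : Eu n → ℝ → ℝ) : ℝ :=
  sSup {y | ∃ x ∈ Metric.ball (0:Eu n) 4, ∃ t ∈ Icc (0:ℝ) 16,
    y = ‖gradient (fun z => V z t) x‖}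

/-- `‖V‖₁ = ‖V‖_{L^∞(Q₄)} + ‖∇ₓV‖_{L^∞(Q₄)}`. -/
noncomputable def Vnorm1 (n : ℕ) (V : Eu n → ℝ → ℝ) : ℝ := VsupQ4 n V + VgradSupQ4 n V

/-- `[V]_{1/2}`, the `1/2`-Hölder seminorm of `V` in time on `Q₄`. -/
noncomputable def Vhalf (n : ℕ) (V : Eu n → ℝ → ℝ) : ℝ :=
  sSup {y | ∃ x ∈ Metric.ball (0:Eu n) 4, ∃ t ∈ Icc (0:ℝ) 16, ∃ s ∈ Icc (0:ℝ) 16,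
    t ≠ s ∧ y = |V x t - V x s| / |t - s| ^ ((1:ℝ)/2)}

/-- Regularity of `V`: bounded, `C¹` in space with bounded spatial gradient,
and uniformly `1/2`-Hölder continuous in time on `Q₄`. -/
def VReg (n : ℕ) (V : Eu n → ℝ → ℝ) : Prop :=
  (∃ C, ∀ x ∈ Metric.ball (0:Eu n) 4, ∀ t ∈ Icc (0:ℝ) 16, |V x t| ≤ C) ∧
  (∀ t ∈ Icc (0:ℝ) 16, ContDiffOn ℝ 1 (fun x => V x t) (Metric.ball (0:Eu n) 4)) ∧
  (∃ C, ∀ x ∈ Metric.ball (0:Eu n) 4, ∀ t ∈ Icc (0:ℝ) 16,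
      ‖gradient (fun z => V z t) x‖ ≤ C) ∧
  (∃ C, ∀ x ∈ Metric.ball (0:Eu n) 4, ∀ t ∈ Icc (0:ℝ) 16, ∀ s ∈ Icc (0:ℝ) 16,
      |V x t - V x s| ≤ C * |t - s| ^ ((1:ℝ)/2))

/-- `u` is a classical solution of `∂ₜu + div(A∇u) + Vu = 0` in `Q₄ = B₄ × [0,16]`:
`C²` in space, `C¹` in time, and the equation holds pointwise. -/
def IsSolQ4 (n : ℕ) (A : Eu n → ℝ → Matrix (Fin n) (Fin n) ℝ) (V u : Eu n → ℝ → ℝ) : Prop :=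
  (∀ t ∈ Icc (0:ℝ) 16, ContDiffOn ℝ 2 (fun x => u x t) (Metric.ball (0:Eu n) 4)) ∧
  (∀ x ∈ Metric.ball (0:Eu n) 4, ContDiffOn ℝ 1 (fun s => u x s) (Icc (0:ℝ) 16)) ∧
  (∀ x ∈ Metric.ball (0:Eu n) 4, ∀ t ∈ Icc (0:ℝ) 16,
      deriv (fun s => u x s) t + divAGrad n A u x t + V x t * u x t = 0)

/-- `‖V(·,0)‖_{L^∞(B₄)}`. -/
noncomputable def V0sup (n : ℕ) (V0 : Eu n → ℝ) : ℝ :=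
  sSup {y | ∃ x ∈ Metric.ball (0:Eu n) 4, y = |V0 x|}

/-- `‖∇V(·,0)‖_{L^∞(B₄)}`. -/
noncomputable def V0gradSup (n : ℕ) (V0 : Eu n → ℝ) : ℝ :=
  sSup {y | ∃ x ∈ Metric.ball (0:Eu n) 4, y = ‖gradient V0 x‖}

/-! With `G t = log (σ t / t)` and `D t = G t - log (σ' t)`, the equation reads `D' = θ(λt)/t ≥ 0`,
and `G' = (exp (-D) - 1) / t`; both `G` and `D` tend to `0` as `t → 0⁺` because `σ'(0) = 1`.
Comparing derivatives on `(0, 1/λ]` therefore gives `D ≥ 0`, hence `G' ≤ 0` and `G ≤ 0`.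
From `log (1/u) ≤ 6 u^{-1/6}` one gets `θ(u) ≤ 6^{3/2} u^{1/4}`, so `D ≤ 4·6^{3/2} (λt)^{1/4}`, and then
`G' ≥ -D/t` gives `G ≥ -16·6^{3/2} (λt)^{1/4}`. Finally `σ t = t e^G` and `σ' t = e^{G - D}`. -/

open Real Topology

theorem le_of_hasDerivWithinAt_le_of_tendsto {a b L : ℝ} {f g f' g' : ℝ → ℝ}
    (hf : ∀ s ∈ Ioc a b, HasDerivWithinAt f (f' s) (Ioc a b) s)
    (hg : ∀ s ∈ Ioc a b, HasDerivWithinAt g (g' s) (Ioc a b) s)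
    (hfg : ∀ s ∈ Ioc a b, f' s ≤ g' s)
    (hfL : Tendsto f (𝓝[>] a) (𝓝 L)) (hgL : Tendsto g (𝓝[>] a) (𝓝 L))
    {t : ℝ} (ht : t ∈ Ioc a b) : f t ≤ g t := by
  have hderiv : ∀ s ∈ Ioc a b, HasDerivWithinAt (fun s => g s - f s) (g' s - f' s) (Ioc a b) s :=
    fun s hs => (hg s hs).sub (hf s hs)
  have hmono : MonotoneOn (fun s => g s - f s) (Ioc a b) := by
    refine monotoneOn_of_hasDerivWithinAt_nonneg (convex_Ioc a b)
      (fun s hs => (hderiv s hs).continuousWithinAt)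
      (fun s hs => (hderiv s (interior_subset hs)).mono interior_subset)
      (fun s hs => sub_nonneg.2 (hfg s (interior_subset hs)))
  have hlim : Tendsto (fun s => g s - f s) (𝓝[>] a) (𝓝 0) := by simpa using hgL.sub hfL
  have hle : 0 ≤ g t - f t :=
    le_of_tendsto hlim <| eventually_of_mem (Ioc_mem_nhdsGT ht.1) fun s hs =>
      hmono ⟨hs.1, hs.2.trans ht.2⟩ ht hs.2
  linarith

theorem hasDerivAt_mul_rpow_const {c x p : ℝ} (hcx : 0 < c * x) :
    HasDerivAt (fun y => (c * y) ^ p) (p * (c * x) ^ p / x) x := by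
  have hc : c ≠ 0 := by rintro rfl; simp at hcx
  have hx : x ≠ 0 := by rintro rfl; simp at hcx
  refine (((hasDerivAt_id x).const_mul c).rpow_const (p := p) (Or.inl hcx.ne')).congr_deriv ?_
  rw [id, rpow_sub_one hcx.ne']
  field_simp

theorem thetaFn_le {u : ℝ} (hu0 : 0 < u) (hu1 : u ≤ 1) :
    thetaFn u ≤ 6 ^ (3 / 2 : ℝ) * u ^ (1 / 4 : ℝ) := by
  have hL : 0 ≤ log (1 / u) := log_nonneg (one_le_one_div hu0 hu1)
  have hlog : log (1 / u) ≤ 6 * (1 / u) ^ (1 / 6 : ℝ) := by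
    have := log_le_rpow_div (one_div_pos.2 hu0).le (show (0:ℝ) < 1 / 6 by norm_num)
    linarith [show (1 / u) ^ (1 / 6 : ℝ) / (1 / 6) = 6 * (1 / u) ^ (1 / 6 : ℝ) by ring]
  have hpow : log (1 / u) ^ (3 / 2 : ℝ) ≤ 6 ^ (3 / 2 : ℝ) * (1 / u) ^ (1 / 4 : ℝ) := by
    calc log (1 / u) ^ (3 / 2 : ℝ) ≤ (6 * (1 / u) ^ (1 / 6 : ℝ)) ^ (3 / 2 : ℝ) :=
          rpow_le_rpow hL hlog (by norm_num)
      _ = 6 ^ (3 / 2 : ℝ) * (1 / u) ^ (1 / 4 : ℝ) := by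
          rw [mul_rpow (by norm_num) (by positivity), ← rpow_mul (by positivity)]
          norm_num
  have hsplit : u ^ (1 / 2 : ℝ) * (1 / u) ^ (1 / 4 : ℝ) = u ^ (1 / 4 : ℝ) := by
    rw [div_rpow zero_le_one hu0.le, one_rpow, mul_one_div, ← rpow_sub hu0]
    norm_num
  calc thetaFn u ≤ u ^ (1 / 2 : ℝ) * (6 ^ (3 / 2 : ℝ) * (1 / u) ^ (1 / 4 : ℝ)) :=
        mul_le_mul_of_nonneg_left hpow (by positivity)
    _ = 6 ^ (3 / 2 : ℝ) * u ^ (1 / 4 : ℝ) := by rw [← hsplit]; ring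

theorem thetaFn_nonneg {u : ℝ} (hu0 : 0 < u) (hu1 : u ≤ 1) : 0 ≤ thetaFn u :=
  mul_nonneg (rpow_nonneg hu0.le _) (rpow_nonneg (log_nonneg (one_le_one_div hu0 hu1)) _)

theorem tendsto_const_mul_mul_rpow_nhdsGT_zero (c lam : ℝ) {p : ℝ} (hp : 0 < p) :
    Tendsto (fun s => c * (lam * s) ^ p) (𝓝[>] 0) (𝓝 0) := by
  have hcont : ContinuousAt (fun s : ℝ => c * (lam * s) ^ p) 0 :=
    continuousAt_const.mul ((continuousAt_const.mul continuousAt_id).rpow_const (Or.inr hp.le))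
  simpa [zero_rpow hp.ne'] using hcont.tendsto.mono_left nhdsWithin_le_nhds

def logSlope (σ : ℝ → ℝ) (s : ℝ) : ℝ := log (σ s) - log s

namespace SigmaODE

variable {lam : ℝ} {σ σ' : ℝ → ℝ}

theorem pos (h : SigmaODE lam σ σ') {s : ℝ} (hs : s ∈ Ioc 0 (1 / lam)) : 0 < σ s :=
  (h.2.2.2.2.1 s hs).1

theorem deriv_pos (h : SigmaODE lam σ σ') {s : ℝ} (hs : s ∈ Ioc 0 (1 / lam)) : 0 < σ' s :=
  (h.2.2.2.2.1 s hs).2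

theorem tendsto_logSlope (hlam : 0 < lam) (h : SigmaODE lam σ σ') :
    Tendsto (logSlope σ) (𝓝[>] 0) (𝓝 0) := by
  obtain ⟨hσ0, hσ'0, -, hσ, hpos, -⟩ := h
  have hb : (0:ℝ) < 1 / lam := by positivity
  have hslope : Tendsto (fun s => σ s / s) (𝓝[>] 0) (𝓝 1) := by
    have h0 := hσ 0 ⟨le_rfl, hb.le⟩
    rw [hσ'0, hasDerivWithinAt_iff_tendsto_slope] at h0
    have h1 := h0.mono_left (nhdsWithin_mono 0 fun s (hs : s ∈ Ioc 0 (1 / lam)) =>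
      ⟨Ioc_subset_Icc_self hs, hs.1.ne'⟩)
    rw [nhdsWithin_Ioc_eq_nhdsGT hb] at h1
    refine h1.congr fun s => ?_
    simp [slope_def_field, hσ0]
  have hlog := ((continuousAt_log one_ne_zero).tendsto.comp hslope).congr' <|
    eventually_of_mem (Ioc_mem_nhdsGT hb) fun s hs =>
      (log_div (hpos s hs).1.ne' hs.1.ne' : log (σ s / s) = logSlope σ s)
  rwa [log_one] at hlog

theorem tendsto_log_deriv (hlam : 0 < lam) (h : SigmaODE lam σ σ') :
    Tendsto (fun s => log (σ' s)) (𝓝[>] 0) (𝓝 0) := by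
  obtain ⟨-, hσ'0, hcont, -⟩ := h
  have hb : (0:ℝ) < 1 / lam := by positivity
  have hlim : Tendsto σ' (𝓝[>] 0) (𝓝 1) := by
    have h0 := (hcont 0 ⟨le_rfl, hb.le⟩).mono (Ioc_subset_Icc_self (a := 0) (b := 1 / lam))
    rwa [ContinuousWithinAt, hσ'0, nhdsWithin_Ioc_eq_nhdsGT hb] at h0
  simpa [Function.comp_def] using (continuousAt_log one_ne_zero).tendsto.comp hlim

theorem hasDerivWithinAt_logSlope (h : SigmaODE lam σ σ') {s : ℝ} (hs : s ∈ Ioc 0 (1 / lam)) :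
    HasDerivWithinAt (logSlope σ) (σ' s / σ s - s⁻¹) (Ioc 0 (1 / lam)) s :=
  (((h.2.2.2.1 s (Ioc_subset_Icc_self hs)).mono Ioc_subset_Icc_self).log
    (h.pos hs).ne').sub (hasDerivAt_log hs.1.ne').hasDerivWithinAt

theorem hasDerivWithinAt_defect (h : SigmaODE lam σ σ') {s : ℝ} (hs : s ∈ Ioc 0 (1 / lam)) :
    HasDerivWithinAt (fun s => logSlope σ s - log (σ' s)) (thetaFn (lam * s) / s)
      (Ioc 0 (1 / lam)) s :=
  (h.2.2.2.2.2 s hs).mono Ioc_subset_Icc_self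

theorem tendsto_defect (hlam : 0 < lam) (h : SigmaODE lam σ σ') :
    Tendsto (fun s => logSlope σ s - log (σ' s)) (𝓝[>] 0) (𝓝 0) := by
  simpa using (h.tendsto_logSlope hlam).sub (h.tendsto_log_deriv hlam)

theorem defect_nonneg (hlam : 0 < lam) (h : SigmaODE lam σ σ') {s : ℝ}
    (hs : s ∈ Ioc 0 (1 / lam)) : 0 ≤ logSlope σ s - log (σ' s) :=
  le_of_hasDerivWithinAt_le_of_tendsto (fun _ _ => hasDerivWithinAt_const _ _ (0 : ℝ))
    (fun _ hr => h.hasDerivWithinAt_defect hr)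
    (fun _ hr => div_nonneg
      (thetaFn_nonneg (mul_pos hlam hr.1) ((le_div_iff₀' hlam).1 hr.2)) hr.1.le)
    tendsto_const_nhds (h.tendsto_defect hlam) hs

theorem defect_le (hlam : 0 < lam) (h : SigmaODE lam σ σ') {s : ℝ}
    (hs : s ∈ Ioc 0 (1 / lam)) :
    logSlope σ s - log (σ' s) ≤ 4 * 6 ^ (3 / 2 : ℝ) * (lam * s) ^ (1 / 4 : ℝ) := by
  refine le_of_hasDerivWithinAt_le_of_tendsto (fun _ hr => h.hasDerivWithinAt_defect hr)
    (fun _ hr => ((hasDerivAt_mul_rpow_const (mul_pos hlam hr.1)).const_mul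
      (4 * 6 ^ (3 / 2 : ℝ))).hasDerivWithinAt)
    (fun r hr => ?_) (h.tendsto_defect hlam)
    (tendsto_const_mul_mul_rpow_nhdsGT_zero _ _ (by norm_num)) hs
  calc thetaFn (lam * r) / r ≤ 6 ^ (3 / 2 : ℝ) * (lam * r) ^ (1 / 4 : ℝ) / r :=
        div_le_div_of_nonneg_right
          (thetaFn_le (mul_pos hlam hr.1) ((le_div_iff₀' hlam).1 hr.2)) hr.1.le
    _ = 4 * 6 ^ (3 / 2 : ℝ) * (1 / 4 * (lam * r) ^ (1 / 4 : ℝ) / r) := by ring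

theorem exp_neg_defect (h : SigmaODE lam σ σ') {s : ℝ} (hs : s ∈ Ioc 0 (1 / lam)) :
    exp (-(logSlope σ s - log (σ' s))) = s * σ' s / σ s := by
  rw [logSlope, neg_sub, sub_sub_eq_add_sub, exp_sub, exp_add, exp_log (h.deriv_pos hs),
    exp_log hs.1, exp_log (h.pos hs), mul_comm]

theorem deriv_logSlope_eq (h : SigmaODE lam σ σ') {s : ℝ} (hs : s ∈ Ioc 0 (1 / lam)) :
    σ' s / σ s - s⁻¹ = (exp (-(logSlope σ s - log (σ' s))) - 1) / s := by
  rw [h.exp_neg_defect hs]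
  field_simp [hs.1.ne', (h.pos hs).ne']

theorem logSlope_nonpos (hlam : 0 < lam) (h : SigmaODE lam σ σ') {s : ℝ}
    (hs : s ∈ Ioc 0 (1 / lam)) : logSlope σ s ≤ 0 :=
  le_of_hasDerivWithinAt_le_of_tendsto (fun _ hr => h.hasDerivWithinAt_logSlope hr)
    (fun _ _ => hasDerivWithinAt_const _ _ (0 : ℝ))
    (fun r hr => by
      rw [h.deriv_logSlope_eq hr]
      exact div_nonpos_of_nonpos_of_nonneg
        (sub_nonpos.2 (exp_le_one_iff.2 (neg_nonpos.2 (h.defect_nonneg hlam hr)))) hr.1.le)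
    (h.tendsto_logSlope hlam) tendsto_const_nhds hs

theorem neg_le_logSlope (hlam : 0 < lam) (h : SigmaODE lam σ σ') {s : ℝ}
    (hs : s ∈ Ioc 0 (1 / lam)) :
    -16 * 6 ^ (3 / 2 : ℝ) * (lam * s) ^ (1 / 4 : ℝ) ≤ logSlope σ s := by
  refine le_of_hasDerivWithinAt_le_of_tendsto
    (fun _ hr => ((hasDerivAt_mul_rpow_const (mul_pos hlam hr.1)).const_mul
      (-16 * 6 ^ (3 / 2 : ℝ))).hasDerivWithinAt)
    (fun _ hr => h.hasDerivWithinAt_logSlope hr) (fun r hr => ?_)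
    (tendsto_const_mul_mul_rpow_nhdsGT_zero _ _ (by norm_num)) (h.tendsto_logSlope hlam) hs
  have hexp := add_one_le_exp (-(logSlope σ r - log (σ' r)))
  have hD := h.defect_le hlam hr
  rw [h.deriv_logSlope_eq hr]
  calc -16 * 6 ^ (3 / 2 : ℝ) * (1 / 4 * (lam * r) ^ (1 / 4 : ℝ) / r)
      = -(4 * 6 ^ (3 / 2 : ℝ) * (lam * r) ^ (1 / 4 : ℝ)) / r := by ring
    _ ≤ (exp (-(logSlope σ r - log (σ' r))) - 1) / r :=
        div_le_div_of_nonneg_right (by linarith) hr.1.le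

end SigmaODE

/-- Properties of the solution `σ` of the ODE
`(d/dt) log(σ/(tσ')) = θ(λt)/t`, `σ(0)=0`, `σ'(0)=1`:
there is an absolute constant `N` such that `t/N ≤ σ(t) ≤ t` and
`1/N ≤ σ'(t) ≤ 1` whenever `0 ≤ λt ≤ 1`. -/
theorem stmt1 :
    ∃ N : ℝ, 0 < N ∧
      ∀ lam : ℝ, 0 < lam → ∀ σ σ' : ℝ → ℝ, SigmaODE lam σ σ' →
        ∀ t : ℝ, 0 ≤ t → lam * t ≤ 1 →
          t / N ≤ σ t ∧ σ t ≤ t ∧ 1 / N ≤ σ' t ∧ σ' t ≤ 1 := by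
  refine ⟨exp (20 * 6 ^ (3 / 2 : ℝ)), exp_pos _, fun lam hlam σ σ' h t ht0 hlt => ?_⟩
  rcases ht0.eq_or_lt with rfl | ht
  · simpa [h.1, h.2.1] using inv_le_one_of_one_le₀ (one_le_exp (by positivity))
  have hs : t ∈ Ioc 0 (1 / lam) := ⟨ht, (le_div_iff₀' hlam).2 hlt⟩
  have hq : (lam * t) ^ (1 / 4 : ℝ) ≤ 1 := rpow_le_one (by positivity) hlt (by norm_num)
  have hC : (0 : ℝ) ≤ 6 ^ (3 / 2 : ℝ) := by positivity
  have hG₀ := h.logSlope_nonpos hlam hs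
  have hG₁ := h.neg_le_logSlope hlam hs
  have hD₀ := h.defect_nonneg hlam hs
  have hD₁ := h.defect_le hlam hs
  have hσ : σ t = t * exp (logSlope σ t) := by
    rw [logSlope, exp_sub, exp_log (h.pos hs), exp_log ht]
    field_simp
  have hσ' : σ' t = exp (logSlope σ t - (logSlope σ t - log (σ' t))) := by
    rw [sub_sub_cancel, exp_log (h.deriv_pos hs)]
  refine ⟨?_, ?_, ?_, ?_⟩
  · rw [hσ, div_eq_mul_inv, ← exp_neg]
    gcongr
    nlinarith
  · rw [hσ]
    exact mul_le_of_le_one_right ht0 (exp_le_one_iff.2 hG₀)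
  · rw [hσ', one_div, ← exp_neg]
    gcongr
    nlinarith
  · rw [hσ']
    exact exp_le_one_iff.2 (by linarith)
end
end

section
/- For every h ∈ C₀^∞(ℝⁿ) and every a > 0, the following inequality holds: ∫_{ℝⁿ} (|x|²/(8a)) h(x)² e^{-|x|²/(4a)} dx ≤ 2a ∫_{ℝⁿ} |∇h(x)|² e^{-|x|²/(4a)} dx + (n/2) ∫_{ℝⁿ} h(x)² e^{-|x|²/(4a)} dx. -/
open MeasureTheory Set Filter

noncomputable section

/-!
Write `w(x) = exp(-|x|²/(4a))`, so that `x · ∇w = -(|x|²/(2a)) w`. Integrating by parts in each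
coordinate gives Euler's identity `∫ x · ∇f = -n ∫ f` for compactly supported `C¹` functions `f`;
applied to `f = h² w` it yields
`∫ (|x|²/(2a)) h² w = n ∫ h² w + 2 ∫ h (x · ∇h) w`.
Bounding `2 h (x · ∇h) ≤ |x|² h²/(4a) + 4a |∇h|²` and absorbing half of the left-hand side gives
the inequality.
-/

open Module

theorem integral_fderiv_apply_self {E : Type*} [NormedAddCommGroup E] [NormedSpace ℝ E]
    [FiniteDimensional ℝ E] [MeasurableSpace E] [BorelSpace E] (μ : Measure E)
    [μ.IsAddHaarMeasure] {f : E → ℝ} (hf : ContDiff ℝ 1 f) (hsupp : HasCompactSupport f) :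
    ∫ x, fderiv ℝ f x x ∂μ = -(finrank ℝ E) * ∫ x, f x ∂μ := by
  let b := Module.finBasis ℝ E
  let ℓ (i : Fin (finrank ℝ E)) : E →L[ℝ] ℝ := LinearMap.toContinuousLinearMap (b.coord i)
  have hdf : Continuous (fderiv ℝ f) := hf.continuous_fderiv one_ne_zero
  have integrable_coord_mul (i : Fin (finrank ℝ E)) :
      Integrable (fun x => ℓ i x * fderiv ℝ f x (b i)) μ :=
    ((ℓ i).continuous.mul (hdf.clm_apply continuous_const)).integrable_of_hasCompactSupport
      (hsupp.fderiv_apply ℝ (b i)).mul_left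
  have coord (i : Fin (finrank ℝ E)) :
      ∫ x, ℓ i x * fderiv ℝ f x (b i) ∂μ = -∫ x, f x ∂μ := by
    have hℓ : ℓ i (b i) = 1 := by simp [ℓ]
    have key := integral_mul_fderiv_eq_neg_fderiv_mul_of_integrable (μ := μ) (f := ℓ i) (g := f)
      (v := b i) ?_ (integrable_coord_mul i) ?_ (fun x _ => (ℓ i).differentiableAt)
      (fun x _ => (hf.differentiable one_ne_zero).differentiableAt)
    · simpa [ContinuousLinearMap.fderiv, hℓ] using key
    · simpa [ContinuousLinearMap.fderiv, hℓ] using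
        hf.continuous.integrable_of_hasCompactSupport hsupp
    · exact ((ℓ i).continuous.mul hf.continuous).integrable_of_hasCompactSupport hsupp.mul_left
  have expand (x : E) : fderiv ℝ f x x = ∑ i, ℓ i x * fderiv ℝ f x (b i) := by
    calc fderiv ℝ f x x = fderiv ℝ f x (∑ i, b.repr x i • b i) := by rw [b.sum_repr]
      _ = ∑ i, ℓ i x * fderiv ℝ f x (b i) := by
        simp only [map_sum, map_smul, smul_eq_mul, ℓ, LinearMap.coe_toContinuousLinearMap',
          Basis.coord_apply]
  simp_rw [expand]
  rw [integral_finsetSum _ fun i _ => integrable_coord_mul i]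
  simp [coord]

theorem two_mul_mul_le_of_abs_le_mul {a u d g r : ℝ} (ha : 0 < a) (hd : |d| ≤ g * r) :
    2 * u * d ≤ r ^ 2 * u ^ 2 / (4 * a) + 4 * a * g ^ 2 := by
  have hud : 2 * u * d ≤ 2 * (r * |u|) * g := by
    have := abs_le.1 ((abs_mul u d).le.trans (mul_le_mul_of_nonneg_left hd (abs_nonneg u)))
    nlinarith [this.2]
  have hsq : 2 * (r * |u|) * g ≤ (r * |u|) ^ 2 / (4 * a) + 4 * a * g ^ 2 := by
    rw [div_add' _ _ _ (by positivity), le_div_iff₀ (by positivity)]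
    nlinarith [sq_nonneg (r * |u| - 4 * a * g)]
  rw [mul_pow, sq_abs] at hsq
  exact hud.trans hsq

section Gaussian

variable {E : Type*} [NormedAddCommGroup E] [InnerProductSpace ℝ E]

theorem fderiv_exp_neg_norm_sq_div_apply_self (a : ℝ) (x : E) :
    fderiv ℝ (fun y : E => Real.exp (-‖y‖ ^ 2 / (4 * a))) x x
      = -(‖x‖ ^ 2 / (2 * a)) * Real.exp (-‖x‖ ^ 2 / (4 * a)) := by
  have hd := (((hasFDerivAt_id x).norm_sq.fun_neg).mul_const (4 * a)⁻¹).exp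
  simp only [← div_eq_mul_inv, id] at hd
  rw [hd.fderiv]
  simp
  ring

variable [FiniteDimensional ℝ E] [MeasurableSpace E] [BorelSpace E] (μ : Measure E)
  [μ.IsAddHaarMeasure] {h : E → ℝ}

theorem integral_norm_sq_mul_sq_mul_gaussian_eq (hh : ContDiff ℝ 1 h)
    (hsupp : HasCompactSupport h) (a : ℝ) :
    (∫ x, ‖x‖ ^ 2 * h x ^ 2 * Real.exp (-‖x‖ ^ 2 / (4 * a)) ∂μ) / (2 * a)
      = finrank ℝ E * ∫ x, h x ^ 2 * Real.exp (-‖x‖ ^ 2 / (4 * a)) ∂μ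
        + ∫ x, 2 * h x * fderiv ℝ h x x * Real.exp (-‖x‖ ^ 2 / (4 * a)) ∂μ := by
  set w : E → ℝ := fun x => Real.exp (-‖x‖ ^ 2 / (4 * a)) with hw
  have hw_smooth : ContDiff ℝ 1 w := ((contDiff_norm_sq ℝ).neg.div_const _).exp
  have integrable_of_eq_zero_off (g : E → ℝ) (hg : Continuous g) (h0 : ∀ x ∉ tsupport h, g x = 0) : Integrable g μ :=
    hg.integrable_of_hasCompactSupport (HasCompactSupport.intro hsupp h0)
  have hderiv (x : E) : fderiv ℝ (fun y => h y ^ 2 * w y) x x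
      = 2 * h x * fderiv ℝ h x x * w x - ‖x‖ ^ 2 * h x ^ 2 * w x / (2 * a) := by
    have hd := (((hh.differentiable one_ne_zero x).hasFDerivAt.pow 2).fun_mul
      (hw_smooth.differentiable one_ne_zero x).hasFDerivAt)
    rw [hd.fderiv]
    simp [hw, fderiv_exp_neg_norm_sq_div_apply_self]
    ring
  have euler := integral_fderiv_apply_self μ ((hh.pow 2).mul hw_smooth)
    (HasCompactSupport.intro hsupp fun x hx => by simp [image_eq_zero_of_notMem_tsupport hx])
  have hdh : Continuous (fderiv ℝ h) := hh.continuous_fderiv one_ne_zero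
  have hcont := hh.continuous
  simp_rw [hderiv] at euler
  rw [integral_sub, integral_div] at euler
  · linarith
  · exact integrable_of_eq_zero_off _ (by fun_prop) fun x hx => by simp [image_eq_zero_of_notMem_tsupport hx]
  · exact integrable_of_eq_zero_off _ (by fun_prop) fun x hx => by simp [image_eq_zero_of_notMem_tsupport hx]

theorem integral_norm_sq_mul_sq_mul_gaussian_le (hh : ContDiff ℝ 1 h)
    (hsupp : HasCompactSupport h) {a : ℝ} (ha : 0 < a) :
    (∫ x, ‖x‖ ^ 2 / (8 * a) * h x ^ 2 * Real.exp (-‖x‖ ^ 2 / (4 * a)) ∂μ)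
      ≤ 2 * a * (∫ x, ‖gradient h x‖ ^ 2 * Real.exp (-‖x‖ ^ 2 / (4 * a)) ∂μ)
        + (finrank ℝ E / 2) * ∫ x, h x ^ 2 * Real.exp (-‖x‖ ^ 2 / (4 * a)) ∂μ := by
  have integrable_of_eq_zero_off (g : E → ℝ) (hg : Continuous g) (h0 : ∀ x ∉ tsupport h, g x = 0) : Integrable g μ :=
    hg.integrable_of_hasCompactSupport (HasCompactSupport.intro hsupp h0)
  have hdh : Continuous (fderiv ℝ h) := hh.continuous_fderiv one_ne_zero
  have hcont : Continuous h := hh.continuous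
  have iX : Integrable (fun x => ‖x‖ ^ 2 * h x ^ 2 * Real.exp (-‖x‖ ^ 2 / (4 * a))) μ :=
    integrable_of_eq_zero_off _ (by fun_prop) fun x hx => by simp [image_eq_zero_of_notMem_tsupport hx]
  have iG : Integrable (fun x => ‖fderiv ℝ h x‖ ^ 2 * Real.exp (-‖x‖ ^ 2 / (4 * a))) μ :=
    integrable_of_eq_zero_off _ (by fun_prop) fun x hx => by simp [fderiv_of_notMem_tsupport ℝ hx]
  have iJ : Integrable (fun x => 2 * h x * fderiv ℝ h x x * Real.exp (-‖x‖ ^ 2 / (4 * a))) μ :=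
    integrable_of_eq_zero_off _ (by fun_prop) fun x hx => by simp [image_eq_zero_of_notMem_tsupport hx]
  have hpoint (x : E) : 2 * h x * fderiv ℝ h x x * Real.exp (-‖x‖ ^ 2 / (4 * a))
      ≤ ‖x‖ ^ 2 * h x ^ 2 * Real.exp (-‖x‖ ^ 2 / (4 * a)) / (4 * a)
        + 4 * a * (‖fderiv ℝ h x‖ ^ 2 * Real.exp (-‖x‖ ^ 2 / (4 * a))) := by
    have hd : |fderiv ℝ h x x| ≤ ‖fderiv ℝ h x‖ * ‖x‖ := (fderiv ℝ h x).le_opNorm x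
    refine (mul_le_mul_of_nonneg_right (two_mul_mul_le_of_abs_le_mul ha hd)
      (Real.exp_nonneg _)).trans_eq ?_
    ring
  have hmono : ∫ x, 2 * h x * fderiv ℝ h x x * Real.exp (-‖x‖ ^ 2 / (4 * a)) ∂μ
      ≤ (∫ x, ‖x‖ ^ 2 * h x ^ 2 * Real.exp (-‖x‖ ^ 2 / (4 * a)) ∂μ) / (4 * a)
        + 4 * a * ∫ x, ‖fderiv ℝ h x‖ ^ 2 * Real.exp (-‖x‖ ^ 2 / (4 * a)) ∂μ := by
    rw [← integral_div, ← integral_const_mul, ← integral_add (iX.div_const _) (iG.const_mul _)]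
    exact integral_mono iJ ((iX.div_const _).add (iG.const_mul _)) hpoint
  have hid := integral_norm_sq_mul_sq_mul_gaussian_eq μ hh hsupp a
  have hlhs : ∫ x, ‖x‖ ^ 2 / (8 * a) * h x ^ 2 * Real.exp (-‖x‖ ^ 2 / (4 * a)) ∂μ
      = (∫ x, ‖x‖ ^ 2 * h x ^ 2 * Real.exp (-‖x‖ ^ 2 / (4 * a)) ∂μ) / (8 * a) := by
    rw [← integral_div]
    congr 1 with x
    ring
  have hgrad (x : E) : ‖gradient h x‖ = ‖fderiv ℝ h x‖ := by
    rw [← toDual_gradient, LinearIsometryEquiv.norm_map]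
  simp_rw [hlhs, hgrad]
  generalize (∫ x, ‖x‖ ^ 2 * h x ^ 2 * Real.exp (-‖x‖ ^ 2 / (4 * a)) ∂μ) = X at hid hmono ⊢
  have h2 : X / (2 * a) = 4 * (X / (8 * a)) := by field_simp; ring
  have h4 : X / (4 * a) = 2 * (X / (8 * a)) := by field_simp; ring
  linarith

end Gaussian

/-- Gaussian boundary estimate: for `h ∈ C₀^∞(ℝⁿ)` and `a > 0`,
`∫ (|x|²/(8a)) h² e^{-|x|²/4a} ≤ 2a ∫ |∇h|² e^{-|x|²/4a} + (n/2) ∫ h² e^{-|x|²/4a}`. -/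
theorem stmt3 (n : ℕ) (h : Eu n → ℝ) (hsm : ContDiff ℝ (⊤ : ℕ∞) h)
    (hsupp : HasCompactSupport h) (a : ℝ) (ha : 0 < a) :
    (∫ x : Eu n, ‖x‖ ^ 2 / (8 * a) * (h x) ^ 2 * Real.exp (-‖x‖ ^ 2 / (4 * a)))
      ≤ 2 * a * (∫ x : Eu n, ‖gradient h x‖ ^ 2 * Real.exp (-‖x‖ ^ 2 / (4 * a)))
        + ((n : ℝ) / 2) * (∫ x : Eu n, (h x) ^ 2 * Real.exp (-‖x‖ ^ 2 / (4 * a))) := by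
  simpa [finrank_euclideanSpace] using
    integral_norm_sq_mul_sq_mul_gaussian_le volume (hsm.of_le (by simp)) hsupp ha
end
end

section
/- (From doubling to a vanishing order bound.) Let f ∈ L²(B₁) with ∫_{B₁} f² dx > 0, and let M ≥ 1. Suppose that ∫_{B_{2r}} f² dx ≤ M ∫_{B_r} f² dx for all 0 < r < 1/2. Then for every 0 < r ≤ 1/2 one has r^𝒞 ≤ ∫_{B_r} f² dx, where 𝒞 = (∫_{B₁} f² dx)^{-1} + 2 (ln M)/(ln 2). -/
open MeasureTheory Set Filter

noncomputable section

lemma key_log (a : ℝ) (ha : 0 < a) : 0 ≤ Real.log 2 / a + Real.log a := by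
  set s := Real.sqrt a with hs
  have hs0 : 0 < s := Real.sqrt_pos.mpr ha
  have ha2 : a = s ^ 2 := (Real.sq_sqrt ha.le).symm
  have hlog : 1 - 1/s ≤ Real.log s := by
    have h := Real.log_le_sub_one_of_pos (inv_pos.mpr hs0)
    rw [Real.log_inv] at h
    have h2 : (s:ℝ)⁻¹ = 1/s := by ring
    linarith [h2 ▸ h]
  have hla : Real.log a = 2 * Real.log s := by
    rw [ha2, Real.log_pow]; push_cast; ring
  have hq : 0 ≤ 2*s^2 - 2*s + Real.log 2 := by
    nlinarith [sq_nonneg (s - 1/2), Real.log_two_gt_d9]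
  have heq : Real.log 2 / a + (2 - 2*(1/s)) = (2*s^2 - 2*s + Real.log 2)/s^2 := by
    rw [ha2]; field_simp; ring
  have h2 : 0 ≤ Real.log 2 / a + (2 - 2*(1/s)) := by
    rw [heq]; positivity
  nlinarith [hlog]

/-- From a doubling inequality to a vanishing order bound. -/
theorem stmt16 (n : ℕ) (f : Eu n → ℝ)
    (hf : IntegrableOn (fun x => (f x) ^ 2) (Metric.ball (0:Eu n) 1))
    (hpos : 0 < ∫ x in Metric.ball (0:Eu n) 1, (f x) ^ 2)
    (M : ℝ) (hM : 1 ≤ M)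
    (hd : ∀ r : ℝ, 0 < r → r < 1/2 →
      (∫ x in Metric.ball (0:Eu n) (2 * r), (f x) ^ 2)
        ≤ M * ∫ x in Metric.ball (0:Eu n) r, (f x) ^ 2) :
    ∀ r : ℝ, 0 < r → r ≤ 1/2 →
      r ^ ((∫ x in Metric.ball (0:Eu n) 1, (f x) ^ 2)⁻¹
          + 2 * (Real.log M / Real.log 2))
        ≤ ∫ x in Metric.ball (0:Eu n) r, (f x) ^ 2 := by
  classical
  intro r hr hr2
  set I : ℝ → ℝ := fun s => ∫ x in Metric.ball (0:EuclideanSpace ℝ (Fin n)) s, (f x) ^ 2 with hIdef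
  have hM0 : (0:ℝ) < M := lt_of_lt_of_le one_pos hM
  have hInonneg : ∀ s : ℝ, 0 ≤ I s := fun s =>
    MeasureTheory.setIntegral_nonneg measurableSet_ball (fun x _ => sq_nonneg _)
  have hmono : ∀ s t : ℝ, s ≤ t → t ≤ 1 → I s ≤ I t := by
    intro s t hst ht1
    exact MeasureTheory.setIntegral_mono_set
      (hf.mono_set (Metric.ball_subset_ball ht1))
      (Filter.Eventually.of_forall fun x => sq_nonneg _)
      (HasSubset.Subset.eventuallyLE (Metric.ball_subset_ball hst))
  -- I 1 ≤ M * I (1/2)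
  have hhalf : I 1 ≤ M * I (1/2) := by
    set s : ℕ → Set (EuclideanSpace ℝ (Fin n)) :=
      fun m => Metric.ball (0:EuclideanSpace ℝ (Fin n)) (1 - 1/(m+2)) with hsdef
    have hsm : ∀ m, MeasurableSet (s m) := fun m => measurableSet_ball
    have hmon : Monotone s := by
      intro a b hab
      apply Metric.ball_subset_ball
      have hcast : (a:ℝ) ≤ b := Nat.cast_le.mpr hab
      have h1 : (1:ℝ)/(b+2) ≤ 1/(a+2) :=
        one_div_le_one_div_of_le (by positivity) (by linarith)
      linarith
    have hU : (⋃ m, s m) = Metric.ball (0:EuclideanSpace ℝ (Fin n)) 1 := by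
      ext x
      simp only [Set.mem_iUnion, Metric.mem_ball, hsdef]
      constructor
      · rintro ⟨m, hm⟩
        have h2 : (0:ℝ) < 1/((m:ℝ)+2) := by positivity
        linarith
      · intro hx
        obtain ⟨m, hm⟩ := exists_nat_one_div_lt (by linarith : (0:ℝ) < 1 - dist x 0)
        refine ⟨m, ?_⟩
        have h3 : (1:ℝ)/((m:ℝ)+2) ≤ 1/((m:ℝ)+1) :=
          one_div_le_one_div_of_le (by positivity) (by linarith)
        linarith
    have hlim := MeasureTheory.tendsto_setIntegral_of_monotone hsm hmon (hU ▸ hf)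
    rw [hU] at hlim
    refine le_of_tendsto hlim (Filter.Eventually.of_forall fun m => ?_)
    have hmn : (0:ℝ) ≤ (m:ℝ) := Nat.cast_nonneg m
    have h2m : (0:ℝ) < 1/((m:ℝ)+2) := by positivity
    have h2m' : (1:ℝ)/((m:ℝ)+2) ≤ 1/2 :=
      one_div_le_one_div_of_le (by norm_num) (by linarith)
    set t : ℝ := 1 - 1/((m:ℝ)+2) with htdef
    have ht0 : 0 < t := by simp only [htdef]; linarith
    have ht1 : t < 1 := by simp only [htdef]; linarith
    have hstep := hd (t/2) (by linarith) (by linarith)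
    have h2t : 2 * (t/2) = t := by ring
    rw [h2t] at hstep
    have hmul : M * I (t/2) ≤ M * I (1/2) :=
      mul_le_mul_of_nonneg_left (hmono (t/2) (1/2) (by linarith) (by norm_num)) hM0.le
    exact le_trans hstep hmul
  -- iteration
  have hpow : ∀ k : ℕ, I 1 ≤ M^(k+1) * I ((1/2)^(k+1)) := by
    intro k
    induction k with
    | zero => simpa using hhalf
    | succ k ih =>
      have hrk : (0:ℝ) < (1/2)^(k+2) := by positivity
      have hlt : ((1/2:ℝ))^(k+2) < 1/2 := by
        calc ((1/2:ℝ))^(k+2) ≤ (1/2)^2 := by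
              apply pow_le_pow_of_le_one (by norm_num) (by norm_num); omega
          _ < 1/2 := by norm_num
      have hstep := hd ((1/2)^(k+2)) hrk hlt
      have h2 : 2 * ((1/2:ℝ))^(k+2) = (1/2)^(k+1) := by ring
      rw [h2] at hstep
      have hMk : (0:ℝ) ≤ M^(k+1) := by positivity
      calc I 1 ≤ M^(k+1) * I ((1/2)^(k+1)) := ih
        _ ≤ M^(k+1) * (M * I ((1/2)^(k+2))) := mul_le_mul_of_nonneg_left hstep hMk
        _ = M^(k+2) * I ((1/2)^(k+2)) := by ring
  -- choose k
  have hex : ∃ m : ℕ, ((1/2:ℝ))^m < r := exists_pow_lt_of_lt_one hr (by norm_num)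
  set k0 := Nat.find hex with hk0
  have hk0spec : ((1/2:ℝ))^k0 < r := Nat.find_spec hex
  have hk02 : 2 ≤ k0 := by
    by_contra h
    interval_cases k0 <;> (have h5 := hk0spec; norm_num at h5; linarith)
  set j := k0 - 1 with hj
  have hj1 : 1 ≤ j := by omega
  have hjk : j + 1 = k0 := by omega
  have hrle : r ≤ ((1/2:ℝ))^j := by
    by_contra h
    push_neg at h
    exact absurd (Nat.find_min hex (by omega : j < k0)) (by simpa using h)
  have h1 : I 1 ≤ M^(j+1) * I r := by
    calc I 1 ≤ M^(j+1) * I ((1/2)^(j+1)) := hpow j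
      _ ≤ M^(j+1) * I r := by
          apply mul_le_mul_of_nonneg_left _ (by positivity)
          exact hmono _ _ (by rw [hjk]; exact hk0spec.le) (by linarith)
  have hMj : (0:ℝ) < M^(j+1) := by positivity
  have hIr : I 1 / M^(j+1) ≤ I r := (div_le_iff₀ hMj).mpr (by linarith [h1])
  have ha0 : 0 < I 1 := hpos
  set a : ℝ := I 1 with ha
  set L : ℝ := Real.log M with hL
  have hL0 : 0 ≤ L := Real.log_nonneg hM
  set l2 : ℝ := Real.log 2 with hl2
  have hl20 : 0 < l2 := Real.log_pos (by norm_num)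
  set C : ℝ := a⁻¹ + 2 * (L / l2) with hC
  have hC0 : 0 ≤ C := by positivity
  have hb0 : (0:ℝ) < (1/2)^j := by positivity
  have key := key_log a ha0
  have step1 : r ^ C ≤ (((1/2:ℝ))^j) ^ C := Real.rpow_le_rpow hr.le hrle hC0
  have step2 : (((1/2:ℝ))^j) ^ C ≤ a / M^(j+1) := by
    have hx : (0:ℝ) < (((1/2:ℝ))^j) ^ C := Real.rpow_pos_of_pos hb0 _
    have hy : (0:ℝ) < a / M^(j+1) := by positivity
    rw [← Real.exp_log hx, ← Real.exp_log hy]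
    apply Real.exp_le_exp.mpr
    rw [Real.log_rpow hb0, Real.log_div (ne_of_gt ha0) (ne_of_gt hMj),
      Real.log_pow, Real.log_pow]
    have hlhalf : Real.log (1/2:ℝ) = -l2 := by
      rw [one_div, Real.log_inv, hl2]
    rw [hlhalf]
    have hja : (1:ℝ) ≤ (j:ℝ) := by exact_mod_cast hj1
    have hexp : C * ((j:ℝ) * -l2) = -((j:ℝ) * (l2 / a)) - 2 * (j:ℝ) * L := by
      rw [hC]
      have hl2ne : l2 ≠ 0 := ne_of_gt hl20
      have hane : a ≠ 0 := ne_of_gt ha0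
      field_simp
      ring
    rw [hexp]
    push_cast
    have hk2 : 0 ≤ ((j:ℝ) - 1) * L := by nlinarith
    have hk3 : 0 ≤ ((j:ℝ) - 1) * (l2/a) := by
      apply mul_nonneg (by linarith) (by positivity)
    nlinarith [key]
  calc r ^ C ≤ (((1/2:ℝ))^j) ^ C := step1
    _ ≤ a / M^(j+1) := step2
    _ ≤ I r := hIr
end
end
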